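/- arXiv:1509.05702 — 4 statements merged into one kernel-verified Lean document; each statement's English description precedes it below -/
import Mathlib

section
/- In any associative ring, if x and y are elements satisfying xy − yx = −1, then for every positive integer m one has (xy)^m = ∑_{i=1}^{m} S(m, i) x^i y^i. -/
/-! Since `y * x = x * y + 1`, left multiplication by `x * y` sends the normally ordered word
`x ^ i * y ^ i` to `x ^ (i + 1) * y ^ (i + 1) + i • (x ^ i * y ^ i)`. Expanding `(x * y) ^ m` in these
words, the coefficients therefore obey `S(m + 1, i) = i S(m, i) + S(m, i - 1)`, the recurrence of
the Stirling numbers of the second kind. -/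

/-- Stirling numbers of the second kind. -/
def stirling : ℕ → ℕ → ℕ
  | 0, 0 => 1
  | 0, _ + 1 => 0
  | _ + 1, 0 => 0
  | N + 1, n + 1 => (n + 1) * stirling N (n + 1) + stirling N n

theorem stirling_eq_stirlingSecond : ∀ n k, stirling n k = Nat.stirlingSecond n k
  | 0, 0 | 0, _ + 1 | _ + 1, 0 => rfl
  | n + 1, k + 1 => by
    rw [stirling, Nat.stirlingSecond_succ_succ, stirling_eq_stirlingSecond n (k + 1),
      stirling_eq_stirlingSecond n k]

namespace WeylRelation

variable {R : Type*} [Ring R] {x y : R}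

theorem mul_mul_pow (h : y * x = x * y + 1) (n : ℕ) :
    x * y * x ^ n = x ^ (n + 1) * y + n • x ^ n := by
  induction n with
  | zero => simp
  | succ n ih =>
    calc x * y * x ^ (n + 1) = x * y * x ^ n * x := by rw [pow_succ, ← mul_assoc]
      _ = (x ^ (n + 1) * y + n • x ^ n) * x := by rw [ih]
      _ = x ^ (n + 1) * (y * x) + n • x ^ (n + 1) := by
          rw [add_mul, mul_assoc, smul_mul_assoc, ← pow_succ]
      _ = x ^ (n + 2) * y + (n + 1) • x ^ (n + 1) := by
          rw [h, mul_add, mul_one, ← mul_assoc, ← pow_succ, succ_nsmul]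
          abel

theorem mul_mul_pow_mul_pow (h : y * x = x * y + 1) (n : ℕ) :
    x * y * (x ^ n * y ^ n) = x ^ (n + 1) * y ^ (n + 1) + n • (x ^ n * y ^ n) := by
  rw [← mul_assoc, mul_mul_pow h, add_mul, mul_assoc, ← pow_succ', smul_mul_assoc]

theorem mul_pow_eq_sum_stirlingSecond (h : y * x = x * y + 1) (m : ℕ) :
    (x * y) ^ m = ∑ i ∈ Finset.range (m + 1), Nat.stirlingSecond m i • (x ^ i * y ^ i) := by
  induction m with
  | zero => simp
  | succ m ih =>
    set a : ℕ → R := fun i ↦ x ^ i * y ^ i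
    set b : ℕ → R := fun i ↦ (i * Nat.stirlingSecond m i) • a i
    have shift : ∑ i ∈ Finset.range (m + 1), b (i + 1) = ∑ i ∈ Finset.range (m + 1), b i := by
      have h₀ : b 0 = 0 := by simp [b]
      have h₁ : b (m + 1) = 0 := by simp [b, Nat.stirlingSecond_eq_zero_of_lt]
      have := Finset.sum_range_succ' b (m + 1)
      rwa [Finset.sum_range_succ, h₀, h₁, add_zero, add_zero, eq_comm] at this
    calc (x * y) ^ (m + 1)
        = ∑ i ∈ Finset.range (m + 1), Nat.stirlingSecond m i • (x * y * a i) := by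
          rw [pow_succ', ih, Finset.mul_sum]
          simp only [mul_smul_comm, a]
      _ = ∑ i ∈ Finset.range (m + 1), (Nat.stirlingSecond m i • a (i + 1) + b i) := by
          simp only [a, b, mul_mul_pow_mul_pow h, smul_add, smul_smul, mul_comm]
      _ = ∑ i ∈ Finset.range (m + 1), (Nat.stirlingSecond m i • a (i + 1) + b (i + 1)) := by
          rw [Finset.sum_add_distrib, Finset.sum_add_distrib, shift]
      _ = ∑ i ∈ Finset.range (m + 2), Nat.stirlingSecond (m + 1) i • a i := by
          simp only [Finset.sum_range_succ' _ (m + 1), Nat.stirlingSecond_succ_zero, zero_smul,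
            zero_add, Nat.stirlingSecond_succ_succ, add_smul, b, add_comm]

end WeylRelation

theorem weyl_xy_pow {R : Type*} [Ring R] (x y : R) (hxy : x * y - y * x = -1)
    (m : ℕ) (hm : 1 ≤ m) :
    (x * y) ^ m = ∑ i ∈ Finset.Icc 1 m, (stirling m i : R) * x ^ i * y ^ i := by
  have hyx : y * x = x * y + 1 := by
    rw [← sub_eq_iff_eq_add', ← neg_sub, hxy, neg_neg]
  have range_eq : Finset.range (m + 1) = insert 0 (Finset.Icc 1 m) := by
    ext i
    simp only [Finset.mem_range, Order.lt_add_one_iff, Finset.mem_insert, Finset.mem_Icc]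
    omega
  rw [WeylRelation.mul_pow_eq_sum_stirlingSecond hyx, range_eq, Finset.sum_insert (by simp)]
  obtain ⟨n, rfl⟩ := Nat.exists_eq_add_of_le' hm
  simp only [Nat.stirlingSecond_succ_zero, zero_smul, zero_add, stirling_eq_stirlingSecond,
    nsmul_eq_mul, mul_assoc]
end

section
/- For every nonnegative integer n and all real x, the Hermite polynomial admits the integral representation H_n(x) = ((−2i)^n e^{x²}/√π) ∫_{−∞}^{∞} ξ^n e^{2ixξ} e^{−ξ²} dξ. -/
/-!
The Fourier transform of the Gaussian gives `∫ e^{2ixξ} e^{-ξ²} dξ = √π e^{-x²}`. Differentiating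
`n` times in `x` under the integral sign (legitimate because every moment of the Gaussian is
integrable) yields `√π (d/dx)^n e^{-x²} = (2i)^n ∫ ξ^n e^{2ixξ} e^{-ξ²} dξ`, and Rodrigues's formula
turns this into the claimed representation of `H_n`.
-/

open MeasureTheory Complex

/-- The physicists' Hermite polynomial via Rodrigues's formula. -/
noncomputable def hermiteR (n : ℕ) (x : ℝ) : ℝ :=
  (-1 : ℝ) ^ n * Real.exp (x ^ 2) * iteratedDeriv n (fun y => Real.exp (-y ^ 2)) x

open Real FourierTransform

lemma iteratedDeriv_ofReal_comp {f : ℝ → ℝ} {n : ℕ} (hf : ContDiff ℝ n f) (x : ℝ) :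
    iteratedDeriv n (fun y => (f y : ℂ)) x = iteratedDeriv n f x := by
  simp only [iteratedDeriv_eq_iteratedFDeriv]
  exact congr($(ofRealCLM.iteratedFDeriv_comp_left hf.contDiffAt le_rfl) _)

lemma iteratedDeriv_integral_cexp_two_mul_I_mul {f : ℝ → ℂ} {n : ℕ}
    (hf : ∀ k ≤ n, Integrable (fun ξ : ℝ => ξ ^ k • f ξ)) (x : ℝ) :
    iteratedDeriv n (fun x : ℝ => ∫ ξ : ℝ, cexp (2 * I * x * ξ) * f ξ) x
      = ∫ ξ : ℝ, (2 * I * ξ) ^ n * cexp (2 * I * x * ξ) * f ξ := by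
  have hf' : ∀ k : ℕ, (k : ℕ∞) ≤ n → Integrable (fun ξ : ℝ => ξ ^ k • f ξ) :=
    fun k hk => hf k (by exact_mod_cast hk)
  have h_fourier : (fun x : ℝ => ∫ ξ : ℝ, cexp (2 * I * x * ξ) * f ξ)
      = fun x => 𝓕 f (-π⁻¹ * x) := by
    ext x
    rw [fourier_real_eq_integral_exp_smul]
    congr with ξ
    rw [smul_eq_mul]
    congr 2
    push_cast
    field_simp
  have h_smooth : ContDiff ℝ n (𝓕 f) :=
    contDiff_fourier fun k hk => by simpa [norm_smul] using (hf' k hk).norm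
  rw [h_fourier, iteratedDeriv_comp_const_smul h_smooth, iteratedDeriv_fourier hf' le_rfl]
  dsimp only
  rw [fourier_real_eq_integral_exp_smul, ← integral_smul]
  congr with ξ
  have h_exp : ((-2 * π * ξ * (-π⁻¹ * x) : ℝ) : ℂ) * I = 2 * I * x * ξ := by
    push_cast
    field_simp
  have h_scalar : ((-π⁻¹ : ℝ) : ℂ) ^ n * (-2 * π * I * ξ) ^ n = (2 * I * ξ) ^ n := by
    rw [← mul_pow]
    push_cast
    field_simp
  rw [Complex.real_smul, ofReal_pow, h_exp, smul_eq_mul, smul_eq_mul]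
  linear_combination (cexp (2 * I * x * ξ) * f ξ) * h_scalar

lemma integrable_pow_smul_cexp_neg_sq (k : ℕ) :
    Integrable (fun ξ : ℝ => ξ ^ k • cexp (-(ξ : ℂ) ^ 2)) := by
  have h := integrable_rpow_mul_exp_neg_mul_sq one_pos (neg_one_lt_zero.trans_le k.cast_nonneg)
  simp only [Real.rpow_natCast, neg_one_mul] at h
  refine h.norm.mono' (by fun_prop) (.of_forall fun ξ => ?_)
  simp [Complex.norm_exp, ← ofReal_pow]

lemma integral_cexp_two_mul_I_mul_mul_cexp_neg_sq (x : ℝ) :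
    ∫ ξ : ℝ, cexp (2 * I * x * ξ) * cexp (-(ξ : ℂ) ^ 2) = √π * cexp (-(x : ℂ) ^ 2) := by
  convert fourierIntegral_gaussian (b := 1) (by simp) (2 * x) using 2
  · ext ξ
    ring_nf
  · rw [div_one, sqrt_eq_rpow, ofReal_cpow pi_pos.le]
    norm_num
  · congr 1
    ring

lemma sqrt_pi_mul_iteratedDeriv_cexp_neg_sq (n : ℕ) (x : ℝ) :
    √π * iteratedDeriv n (fun y : ℝ => cexp (-(y : ℂ) ^ 2)) x
      = (2 * I) ^ n * ∫ ξ : ℝ, (ξ : ℂ) ^ n * cexp (2 * I * x * ξ) * cexp (-(ξ : ℂ) ^ 2) := by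
  have h := iteratedDeriv_integral_cexp_two_mul_I_mul
    (fun k _ => integrable_pow_smul_cexp_neg_sq k) (n := n) x
  simp only [integral_cexp_two_mul_I_mul_mul_cexp_neg_sq, iteratedDeriv_const_mul_field] at h
  rw [h, ← integral_const_mul]
  congr with ξ
  ring

theorem hermite_integral_representation (n : ℕ) (x : ℝ) :
    (hermiteR n x : ℂ)
      = (-2 * I) ^ n * Real.exp (x ^ 2) / Real.sqrt Real.pi *
        ∫ ξ : ℝ, (ξ : ℂ) ^ n * Complex.exp (2 * I * x * ξ) * Complex.exp (-(ξ : ℂ) ^ 2) := by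
  have h_smooth : ContDiff ℝ n fun y : ℝ => Real.exp (-y ^ 2) := by fun_prop
  have h_sqrt : (√π : ℂ) ≠ 0 := ofReal_ne_zero.2 (sqrt_pos.2 pi_pos).ne'
  have h_sign : (-2 * I) ^ n = (-1) ^ n * (2 * I) ^ n := by rw [← mul_pow]; ring
  rw [hermiteR, ofReal_mul, ← iteratedDeriv_ofReal_comp h_smooth, h_sign, div_mul_eq_mul_div,
    eq_div_iff h_sqrt]
  push_cast
  linear_combination (-1) ^ n * cexp (x ^ 2) * sqrt_pi_mul_iteratedDeriv_cexp_neg_sq n x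
end

section
/- For all α > 1 and all t > 0, α e^{−2t} ≤ (1 − e^{−2t})/(1 − e^{−2t/α}) ≤ α. -/
/-! With `y = exp (-2t/α) ∈ (0, 1)` we have `exp (-2t) = y ^ α`, and both bounds are Bernoulli's
inequality `1 + α (x - 1) ≤ x ^ α`: at `x = y` it gives `1 - y ^ α ≤ α (1 - y)`, and at `x = y⁻¹`,
after multiplying by `y ^ α` and using `1 - y ≤ y⁻¹ - 1`, it gives `α y ^ α (1 - y) ≤ 1 - y ^ α`. -/

namespace Real

variable {y p : ℝ}

theorem one_sub_rpow_le_mul_one_sub (hy : 0 ≤ y) (hp : 1 ≤ p) : 1 - y ^ p ≤ p * (1 - y) := by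
  have bernoulli := one_add_mul_self_le_rpow_one_add (s := y - 1) (by linarith) hp
  rw [add_sub_cancel] at bernoulli
  linarith

theorem mul_rpow_mul_one_sub_le_one_sub_rpow (hy : 0 < y) (hp : 1 ≤ p) :
    p * y ^ p * (1 - y) ≤ 1 - y ^ p := by
  have bernoulli_inv : 1 - y⁻¹ ^ p ≤ p * (1 - y⁻¹) :=
    one_sub_rpow_le_mul_one_sub (inv_nonneg.mpr hy.le) hp
  rw [inv_rpow hy.le] at bernoulli_inv
  have gap : 1 - y ≤ y⁻¹ - 1 := by
    rw [← sub_nonneg]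
    have : y⁻¹ - 1 - (1 - y) = (1 - y) ^ 2 / y := by field_simp
    rw [this]
    positivity
  calc p * y ^ p * (1 - y) ≤ p * y ^ p * (y⁻¹ - 1) := by gcongr
    _ = y ^ p * (p * (y⁻¹ - 1)) := by ring
    _ ≤ y ^ p * ((y ^ p)⁻¹ - 1) := by gcongr; linarith
    _ = 1 - y ^ p := by field_simp

theorem mul_rpow_le_one_sub_rpow_div_one_sub_le (hy₀ : 0 < y) (hy₁ : y < 1) (hp : 1 ≤ p) :
    p * y ^ p ≤ (1 - y ^ p) / (1 - y) ∧ (1 - y ^ p) / (1 - y) ≤ p := by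
  have hden : 0 < 1 - y := sub_pos.mpr hy₁
  rw [le_div_iff₀ hden, div_le_iff₀ hden]
  exact ⟨mul_rpow_mul_one_sub_le_one_sub_rpow hy₀ hp, one_sub_rpow_le_mul_one_sub hy₀.le hp⟩

end Real

theorem mehler_alpha_quotient_bounds (α t : ℝ) (hα : 1 < α) (ht : 0 < t) :
    α * Real.exp (-2 * t) ≤ (1 - Real.exp (-2 * t)) / (1 - Real.exp (-2 * t / α)) ∧
    (1 - Real.exp (-2 * t)) / (1 - Real.exp (-2 * t / α)) ≤ α := by
  have hα₀ : 0 < α := by linarith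
  have hpow : Real.exp (-2 * t) = Real.exp (-2 * t / α) ^ α := by
    rw [← Real.exp_mul, div_mul_cancel₀ _ hα₀.ne']
  have hlt : Real.exp (-2 * t / α) < 1 :=
    Real.exp_lt_one_iff.mpr (div_neg_of_neg_of_pos (by linarith) hα₀)
  rw [hpow]
  exact Real.mul_rpow_le_one_sub_rpow_div_one_sub_le (Real.exp_pos _) hlt hα.le
end

section
/- For all α > 1, t > 0, and x, y ∈ ℝ^d, |e^{−t/α} x − y|² / (1 − e^{−2t/α}) ≥ (α/2) e^{−2t} |e^{−t} x − y|² / (1 − e^{−2t}) − t² min(|x|², |y|²) / (1 − e^{−2t/α}). -/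
/-!
Write `a = e^{-t/α}` and `b = e^{-t}`, so `b ≤ a` and both `a - b` and `1 - b/a` are at most `t`.
Moving from `a x - y` to `b x - y` costs at most `t‖x‖` (shift `x`) and at most `t‖y‖`
(rescale `a x - y` by `b/a` and shift `y`), whence `|b x - y|² ≤ 2|a x - y|² + 2t² min(|x|², |y|²)`.
The weights compare by `α b² (1 - a²) ≤ 2t b² ≤ 1 - b²`, using `e^u ≥ 1 + u` twice.
-/

open Real

section NormedSpace

variable {E : Type*} [SeminormedAddCommGroup E] [NormedSpace ℝ E]

theorem norm_smul_sub_le_add_abs_sub_mul_norm (a b : ℝ) (x y : E) :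
    ‖b • x - y‖ ≤ ‖a • x - y‖ + |a - b| * ‖x‖ := by
  calc ‖b • x - y‖ = ‖(a • x - y) - (a - b) • x‖ := by congr 1; module
    _ ≤ ‖a • x - y‖ + ‖(a - b) • x‖ := norm_sub_le _ _
    _ = ‖a • x - y‖ + |a - b| * ‖x‖ := by rw [norm_smul, Real.norm_eq_abs]

theorem norm_smul_sub_le_add_one_sub_div_mul_norm {a b : ℝ} (ha : 0 < a) (hb : 0 ≤ b)
    (hba : b ≤ a) (x y : E) :
    ‖b • x - y‖ ≤ ‖a • x - y‖ + (1 - b / a) * ‖y‖ := by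
  have hq₀ : 0 ≤ b / a := div_nonneg hb ha.le
  have hq₁ : b / a ≤ 1 := (div_le_one ha).2 hba
  calc ‖b • x - y‖ = ‖(b / a) • (a • x - y) - (1 - b / a) • y‖ := by
        congr 1
        rw [smul_sub, smul_smul, div_mul_cancel₀ b ha.ne']
        module
    _ ≤ ‖(b / a) • (a • x - y)‖ + ‖(1 - b / a) • y‖ := norm_sub_le _ _
    _ = (b / a) * ‖a • x - y‖ + (1 - b / a) * ‖y‖ := by
        rw [norm_smul, norm_smul, Real.norm_of_nonneg hq₀, Real.norm_of_nonneg (sub_nonneg.2 hq₁)]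
    _ ≤ ‖a • x - y‖ + (1 - b / a) * ‖y‖ := by
        gcongr
        exact mul_le_of_le_one_left (norm_nonneg _) hq₁

theorem norm_exp_neg_smul_sub_le {s t : ℝ} (hs : 0 ≤ s) (hst : s ≤ t) (x y : E) :
    ‖exp (-t) • x - y‖ ≤ ‖exp (-s) • x - y‖ + t * min ‖x‖ ‖y‖ := by
  have hexp : exp (-t) ≤ exp (-s) := exp_le_exp.2 (neg_le_neg hst)
  have hshift_x : |exp (-s) - exp (-t)| ≤ t := by
    rw [abs_of_nonneg (sub_nonneg.2 hexp)]
    linarith [exp_le_one_iff.2 (neg_nonpos.2 hs), one_sub_le_exp_neg t]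
  have hshift_y : 1 - exp (-t) / exp (-s) ≤ t := by
    rw [← exp_sub]
    linarith [add_one_le_exp (-t - -s)]
  rw [mul_min_of_nonneg _ _ (hs.trans hst), ← sub_le_iff_le_add', le_min_iff]
  constructor
  · calc ‖exp (-t) • x - y‖ - ‖exp (-s) • x - y‖ ≤ |exp (-s) - exp (-t)| * ‖x‖ :=
          sub_le_iff_le_add'.2 (norm_smul_sub_le_add_abs_sub_mul_norm _ _ x y)
      _ ≤ t * ‖x‖ := by gcongr
  · calc ‖exp (-t) • x - y‖ - ‖exp (-s) • x - y‖ ≤ (1 - exp (-t) / exp (-s)) * ‖y‖ :=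
          sub_le_iff_le_add'.2 <|
            norm_smul_sub_le_add_one_sub_div_mul_norm (exp_pos _) (exp_pos _).le hexp x y
      _ ≤ t * ‖y‖ := by gcongr

theorem sq_norm_exp_neg_smul_sub_le {s t : ℝ} (hs : 0 ≤ s) (hst : s ≤ t) (x y : E) :
    ‖exp (-t) • x - y‖ ^ 2
      ≤ 2 * ‖exp (-s) • x - y‖ ^ 2 + 2 * t ^ 2 * min (‖x‖ ^ 2) (‖y‖ ^ 2) := by
  have hmin : min (‖x‖ ^ 2) (‖y‖ ^ 2) = min ‖x‖ ‖y‖ ^ 2 :=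
    ((pow_left_monotoneOn (n := 2)).map_min (norm_nonneg x) (norm_nonneg y)).symm
  calc ‖exp (-t) • x - y‖ ^ 2 ≤ (‖exp (-s) • x - y‖ + t * min ‖x‖ ‖y‖) ^ 2 := by
        gcongr
        exact norm_exp_neg_smul_sub_le hs hst x y
    _ ≤ 2 * (‖exp (-s) • x - y‖ ^ 2 + (t * min ‖x‖ ‖y‖) ^ 2) := add_sq_le
    _ = _ := by rw [hmin]; ring

end NormedSpace

theorem mul_exp_neg_two_mul_mul_one_sub_le {α : ℝ} (hα : 0 < α) (t : ℝ) :
    α * exp (-2 * t) * (1 - exp (-2 * t / α)) ≤ 1 - exp (-2 * t) := by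
  have h₁ : 1 - exp (-2 * t / α) ≤ 2 * t / α := by
    have h := one_sub_le_exp_neg (2 * t / α)
    rw [show -(2 * t / α) = -2 * t / α by ring] at h
    linarith
  have h₂ : 2 * t * exp (-2 * t) ≤ 1 - exp (-2 * t) := by
    have h := mul_le_mul_of_nonneg_left (add_one_le_exp (2 * t)) (exp_pos (-2 * t)).le
    rw [← exp_add, neg_mul, neg_add_cancel, exp_zero, ← neg_mul] at h
    linarith
  calc α * exp (-2 * t) * (1 - exp (-2 * t / α)) ≤ α * exp (-2 * t) * (2 * t / α) := by
        gcongr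
    _ = 2 * t * exp (-2 * t) := by field_simp
    _ ≤ 1 - exp (-2 * t) := h₂

theorem mehler_alpha_quadratic_bound (d : ℕ) (α t : ℝ) (hα : 1 < α) (ht : 0 < t)
    (x y : EuclideanSpace ℝ (Fin d)) :
    ‖Real.exp (-t / α) • x - y‖ ^ 2 / (1 - Real.exp (-2 * t / α))
      ≥ α / 2 * Real.exp (-2 * t) * (‖Real.exp (-t) • x - y‖ ^ 2 / (1 - Real.exp (-2 * t)))
        - t ^ 2 * min (‖x‖ ^ 2) (‖y‖ ^ 2) / (1 - Real.exp (-2 * t / α)) := by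
  have hα₀ : 0 < α := one_pos.trans hα
  have hsq := sq_norm_exp_neg_smul_sub_le (div_pos ht hα₀).le (div_le_self ht.le hα.le) x y
  rw [← neg_div] at hsq
  have hweight := mul_exp_neg_two_mul_mul_one_sub_le hα₀ t
  have hDa : 0 < 1 - exp (-2 * t / α) := sub_pos.2 (exp_lt_one_iff.2 (by
    rw [neg_mul, neg_div]; exact neg_neg_of_pos (by positivity)))
  have hDb : 0 < 1 - exp (-2 * t) := sub_pos.2 (exp_lt_one_iff.2 (by linarith))
  set P := ‖exp (-t / α) • x - y‖ ^ 2
  set Q := t ^ 2 * min (‖x‖ ^ 2) (‖y‖ ^ 2)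
  have hPQ : 0 ≤ P + Q := by positivity
  calc α / 2 * exp (-2 * t) * (‖exp (-t) • x - y‖ ^ 2 / (1 - exp (-2 * t)))
        - Q / (1 - exp (-2 * t / α))
      ≤ α / 2 * exp (-2 * t) * ((2 * P + 2 * Q) / (1 - exp (-2 * t)))
        - Q / (1 - exp (-2 * t / α)) := by
        gcongr; linarith
    _ ≤ (P + Q) / (1 - exp (-2 * t / α)) - Q / (1 - exp (-2 * t / α)) := by
        gcongr ?_ - _
        rw [mul_div_assoc', div_le_div_iff₀ hDb hDa]
        nlinarith [mul_le_mul_of_nonneg_right hweight hPQ]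
    _ = P / (1 - exp (-2 * t / α)) := by ring
end
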